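/- arXiv:1107.0208 — 2 statements merged into one kernel-verified Lean document; each statement's English description precedes it below -/
import Mathlib

section
/- For every probability measure μ on ℕ = {1,2,…} with finite mean m = m₁(μ) > 1, the quantity J(μ) = log 4 − H(μ)/m − (1/m) log(m − 1) + log(1 − 1/m) is nonnegative, and J(μ) = 0 if and only if μ = 𝔊₂, the geometric distribution of parameter 1/2. -/
/-!
Writing `H` for the entropy of `p` and `h` for the binary entropy,
`J = (log 2 - H / m) + (log 2 - h (1 / m))`.
The cross entropy of `p` against `𝔊₂` is `∑ k p_k · k log 2 = m log 2`, so by Gibbs' inequality the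
first summand is `KL(p ‖ 𝔊₂) / m ≥ 0`, vanishing exactly when `p = 𝔊₂`. The second is the
divergence of the Bernoulli law `(1/m, 1 - 1/m)` from the fair coin, vanishing exactly when
`m = 2`, which is the mean of `𝔊₂`.
-/

noncomputable section

open Real InformationTheory

section Gibbs

theorem mul_klFun_div {p q : ℝ} (hpq : q = 0 → p = 0) :
    q * klFun (p / q) = p * log p - p * log q + q - p := by
  by_cases hq : q = 0
  · simp [hq, hpq hq]
  by_cases hp : p = 0
  · simp [hp, klFun_zero]
  rw [klFun_apply, log_div hp hq]
  field_simp

theorem mul_klFun_div_eq_zero_iff {p q : ℝ} (hp : 0 ≤ p) (hq : 0 ≤ q) (hpq : q = 0 → p = 0) :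
    q * klFun (p / q) = 0 ↔ p = q := by
  rcases hq.eq_or_lt with hq0 | hq0
  · simp [← hq0, hpq hq0.symm]
  rw [mul_eq_zero, or_iff_right hq0.ne', klFun_eq_zero_iff (div_nonneg hp hq0.le),
    div_eq_one_iff_eq hq0.ne']

theorem mul_klFun_div_nonneg {p q : ℝ} (hp : 0 ≤ p) (hq : 0 ≤ q) : 0 ≤ q * klFun (p / q) :=
  mul_nonneg hq (klFun_nonneg (div_nonneg hp hq))

variable {ι : Type*} {p q : ι → ℝ} {c : ℝ}
  (hp : ∀ i, 0 ≤ p i) (hq : ∀ i, 0 ≤ q i) (hpq : ∀ i, q i = 0 → p i = 0)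
  (hp1 : HasSum p 1) (hq1 : HasSum q 1) (hc : HasSum (fun i => -(p i * log (q i))) c)
include hp hq hpq hp1 hq1 hc

theorem summable_negMulLog_of_hasSum_crossEntropy : Summable fun i => negMulLog (p i) := by
  refine Summable.of_nonneg_of_le
    (fun i => negMulLog_nonneg (hp i) (le_hasSum hp1 i fun j _ => hp j))
    (fun i => ?_) ((hc.add hq1).sub hp1).summable
  have hid := mul_klFun_div (hpq i)
  have hkl := mul_klFun_div_nonneg (hp i) (hq i)
  simp only [negMulLog]
  linarith

theorem hasSum_mul_klFun_div :
    HasSum (fun i => q i * klFun (p i / q i)) (c - ∑' i, negMulLog (p i)) := by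
  have hH := (summable_negMulLog_of_hasSum_crossEntropy hp hq hpq hp1 hq1 hc).hasSum
  have h := ((hc.add hq1).sub hp1).sub hH
  rw [add_sub_cancel_right] at h
  refine h.congr_fun fun i => ?_
  rw [mul_klFun_div (hpq i), negMulLog]
  ring

theorem tsum_negMulLog_le_crossEntropy : ∑' i, negMulLog (p i) ≤ c :=
  sub_nonneg.mp <| (hasSum_mul_klFun_div hp hq hpq hp1 hq1 hc).nonneg
    fun i => mul_klFun_div_nonneg (hp i) (hq i)

theorem tsum_negMulLog_eq_crossEntropy_iff : ∑' i, negMulLog (p i) = c ↔ p = q := by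
  have hd := hasSum_mul_klFun_div hp hq hpq hp1 hq1 hc
  have hd0 : c - ∑' i, negMulLog (p i) = 0 ↔ HasSum (fun i => q i * klFun (p i / q i)) 0 :=
    ⟨fun h => h ▸ hd, hd.unique⟩
  rw [eq_comm, ← sub_eq_zero, hd0,
    hasSum_zero_iff_of_nonneg fun i => mul_klFun_div_nonneg (hp i) (hq i), funext_iff, funext_iff]
  exact forall_congr' fun i => mul_klFun_div_eq_zero_iff (hp i) (hq i) (hpq i)

end Gibbs

def geomHalf (k : ℕ) : ℝ := if k = 0 then 0 else 2⁻¹ ^ k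

theorem geomHalf_nonneg (k : ℕ) : 0 ≤ geomHalf k := by
  unfold geomHalf; split_ifs <;> positivity

theorem geomHalf_eq_zero_iff {k : ℕ} : geomHalf k = 0 ↔ k = 0 := by
  unfold geomHalf; split_ifs with hk <;> simp [hk]

-- Holds at `k = 0` too, since `log 0 = 0`.
theorem log_geomHalf (k : ℕ) : log (geomHalf k) = -(k * log 2) := by
  unfold geomHalf
  split_ifs with hk
  · simp [hk]
  · rw [log_pow, log_inv]; ring

theorem hasSum_geomHalf : HasSum geomHalf 1 := by
  rw [← hasSum_nat_add_iff' 1, Finset.sum_range_one, geomHalf, if_pos rfl, sub_zero]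
  refine (hasSum_geometric_two' 1).congr_fun fun n => ?_
  simp [geomHalf, pow_succ, div_eq_inv_mul, mul_comm]

theorem hasSum_coe_mul_geomHalf : HasSum (fun k : ℕ => k * geomHalf k) 2 := by
  have h := hasSum_coe_mul_geometric_of_norm_lt_one (𝕜 := ℝ) (r := 2⁻¹) (by norm_num)
  norm_num at h
  refine h.congr_fun fun k => ?_
  rcases eq_or_ne k 0 with rfl | hk <;> simp [geomHalf, *]

theorem eq_geomHalf_iff {p : ℕ → ℝ} (hp0 : p 0 = 0) :
    p = geomHalf ↔ ∀ k, 1 ≤ k → p k = 2⁻¹ ^ k := by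
  refine ⟨fun h k hk => by simp [h, geomHalf, Nat.one_le_iff_ne_zero.mp hk], fun h => ?_⟩
  ext k
  rcases eq_or_ne k 0 with rfl | hk
  · simp [hp0, geomHalf]
  · simp [h k (Nat.one_le_iff_ne_zero.mpr hk), geomHalf, hk]

theorem rateJ_eq_add_binEntropy {m : ℝ} (H : ℝ) (hm : 1 < m) :
    log 4 - H / m - m⁻¹ * log (m - 1) + log (1 - m⁻¹) =
      (log 2 - H / m) + (log 2 - binEntropy m⁻¹) := by
  have hm0 : m ≠ 0 := by positivity
  have hm1 : m - 1 ≠ 0 := by linarith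
  have h4 : log 4 = 2 * log 2 := by
    rw [show (4 : ℝ) = 2 ^ 2 by norm_num, log_pow]; push_cast; ring
  have hsub : 1 - m⁻¹ = (m - 1) / m := by field_simp
  rw [binEntropy, h4, hsub, inv_inv, inv_div, log_div hm1 hm0, log_div hm0 hm1]
  field_simp
  ring

/-- **Nonnegativity and uniqueness of the zero of the rate function `J`.**
For a probability measure `p` on `ℕ = {1,2,…}` (represented as a nonnegative summable
sequence with `p 0 = 0` and total mass `1`) with finite mean `m = ∑ k k·p k > 1`, the
quantity `J(p) = log 4 − H(p)/m − (1/m) log(m−1) + log(1 − 1/m)` is nonnegative, and it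
vanishes iff `p` is the geometric distribution with parameter `1/2`, i.e. `p k = 2^{−k}`
for all `k ≥ 1`. -/
theorem rateJ_nonneg_eq_zero_iff_geometric
    (p : ℕ → ℝ) (hp0 : p 0 = 0) (hpnn : ∀ k, 0 ≤ p k) (hpsum : HasSum p 1)
    (hmean : Summable fun k : ℕ => (k : ℝ) * p k)
    (m : ℝ) (hm : m = ∑' k : ℕ, (k : ℝ) * p k) (hm1 : 1 < m)
    (H : ℝ) (hH : H = ∑' k : ℕ, Real.negMulLog (p k))
    (J : ℝ)
    (hJ : J = Real.log 4 - H / m - m⁻¹ * Real.log (m - 1) + Real.log (1 - m⁻¹)) :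
    0 ≤ J ∧ (J = 0 ↔ ∀ k : ℕ, 1 ≤ k → p k = (2 : ℝ)⁻¹ ^ k) := by
  have hm0 : 0 < m := by linarith
  have hp_ac : ∀ k, geomHalf k = 0 → p k = 0 := fun k hk => geomHalf_eq_zero_iff.mp hk ▸ hp0
  have hcross : HasSum (fun k => -(p k * log (geomHalf k))) (m * log 2) := by
    rw [hm]
    refine (hmean.hasSum.mul_right (log 2)).congr_fun fun k => ?_
    rw [log_geomHalf]
    ring
  have hgibbs :=
    tsum_negMulLog_le_crossEntropy hpnn geomHalf_nonneg hp_ac hpsum hasSum_geomHalf hcross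
  have hgibbs_eq :=
    tsum_negMulLog_eq_crossEntropy_iff hpnn geomHalf_nonneg hp_ac hpsum hasSum_geomHalf hcross
  rw [← hH] at hgibbs hgibbs_eq
  have hentropy : 0 ≤ log 2 - H / m := by
    rw [sub_nonneg, div_le_iff₀ hm0]
    linarith
  have hbin : 0 ≤ log 2 - binEntropy m⁻¹ := sub_nonneg.mpr binEntropy_le_log_two
  have hentropy_eq : log 2 - H / m = 0 ↔ p = geomHalf := by
    rw [sub_eq_zero, eq_div_iff hm0.ne', ← hgibbs_eq, mul_comm, eq_comm]
  have hbin_eq : log 2 - binEntropy m⁻¹ = 0 ↔ m = 2 := by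
    rw [sub_eq_zero, eq_comm, binEntropy_eq_log_two, inv_inj]
  have hmean_geomHalf : p = geomHalf → m = 2 := fun h => by
    rw [hm, h, hasSum_coe_mul_geomHalf.tsum_eq]
  rw [hJ, rateJ_eq_add_binEntropy H hm1, add_eq_zero_iff_of_nonneg hentropy hbin, hentropy_eq,
    hbin_eq, ← eq_geomHalf_iff hp0]
  exact ⟨add_nonneg hentropy hbin, ⟨And.left, fun h => ⟨h, hmean_geomHalf h⟩⟩⟩

end
end

section
/- For every real λ ≥ 1, sup{ (1/m₁(p)) ∑_{n≥1} p_n log(λ / p_n) + Θ(m₁(p))/m₁(p) : p ∈ 𝔐₁¹(ℕ) } = 2 log(1 + √λ). (This identifies, via the variational support-edge formula, the maximum (1 + √λ)² of the support of the free Poisson distribution of parameter λ, whose free cumulants are k_n = λ for all n.) -/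
/-!
Write `λ = s²`. The geometric law `q_n = s (1 + s)⁻ⁿ` on `{1, 2, …}` has
`log (λ / q_n) = log s + n log (1 + s)`, so summing Gibbs' inequality
`p log (λ / p) ≤ p log (λ / q) + q - p` gives `∑ p_n log (λ / p_n) ≤ log s + m log (1 + s)`
for every `p` of mean `m`. Since `Θ(m) = m H(1/m)` with `H` the binary entropy, Gibbs' inequality
for two-point laws gives `Θ(m) ≤ m log (1 + s) - log s`. Adding and dividing by `m` bounds the
functional by `2 log (1 + s)`, and both inequalities are equalities at `p = q`, of mean `1 + 1/s`.
-/

noncomputable section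

/-- `Θ(m) = log(m−1) − m log(1−1/m)`. -/
def Theta (m : ℝ) : ℝ := Real.log (m - 1) - m * Real.log (1 - m⁻¹)

open Real

theorem mul_log_div_le {a p q : ℝ} (ha : a ≠ 0) (hp : 0 ≤ p) (hq : 0 < q) :
    p * log (a / p) ≤ p * log (a / q) + (q - p) := by
  rcases hp.eq_or_lt with rfl | hp
  · simpa using hq.le
  have hsplit : log (a / p) = log (a / q) + log (q / p) := by
    rw [← log_mul (by positivity) (by positivity), div_mul_div_cancel₀ hq.ne']
  have hgibbs : p * log (q / p) ≤ q - p := by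
    calc p * log (q / p) ≤ p * (q / p - 1) := by
          gcongr
          exact log_le_sub_one_of_pos (by positivity)
      _ = q - p := by field_simp
  rw [hsplit, mul_add]
  linarith

theorem binEntropy_le_crossEntropy {x y : ℝ} (hx₀ : 0 ≤ x) (hx₁ : x ≤ 1) (hy₀ : 0 < y)
    (hy₁ : y < 1) : binEntropy x ≤ x * log y⁻¹ + (1 - x) * log (1 - y)⁻¹ := by
  have h₁ := mul_log_div_le one_ne_zero hx₀ hy₀
  have h₂ := mul_log_div_le one_ne_zero (sub_nonneg.2 hx₁) (sub_pos.2 hy₁)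
  simp only [one_div] at h₁ h₂
  rw [binEntropy]
  linarith

theorem Theta_eq_mul_binEntropy (m : ℝ) : Theta m = m * binEntropy m⁻¹ := by
  rcases eq_or_ne m 0 with rfl | hm₀
  · simp [Theta]
  rcases eq_or_ne m 1 with rfl | hm₁
  · simp [Theta]
  have hsplit : log (m - 1) = log m + log (1 - m⁻¹) := by
    rw [← log_mul hm₀ (by rw [sub_ne_zero]; exact (inv_ne_one.2 hm₁).symm)]
    congr 1
    field_simp
  rw [Theta, binEntropy, hsplit, inv_inv, log_inv]
  field_simp
  ring

theorem Theta_le {m s : ℝ} (hm : 1 ≤ m) (hs : 0 < s) : Theta m ≤ m * log (1 + s) - log s := by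
  have hm₀ : 0 < m := one_pos.trans_le hm
  have hcross := binEntropy_le_crossEntropy (inv_nonneg.2 hm₀.le) (inv_le_one_of_one_le₀ hm)
    (y := s / (1 + s)) (by positivity) ((div_lt_one (by positivity)).2 (by linarith))
  have hy : (1 - s / (1 + s))⁻¹ = 1 + s := by field_simp; ring
  rw [inv_div, hy, log_div (by positivity) hs.ne'] at hcross
  rw [Theta_eq_mul_binEntropy]
  calc m * binEntropy m⁻¹
      ≤ m * (m⁻¹ * (log (1 + s) - log s) + (1 - m⁻¹) * log (1 + s)) := by gcongr
    _ = m * log (1 + s) - log s := by field_simp; ring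

theorem Theta_one_add_inv {s : ℝ} (hs : 0 < s) :
    Theta (1 + s⁻¹) = (1 + s⁻¹) * log (1 + s) - log s := by
  have hinv : 1 - (1 + s⁻¹)⁻¹ = (1 + s)⁻¹ := by field_simp; ring
  rw [Theta, add_sub_cancel_left, hinv, log_inv, log_inv]
  ring

theorem one_le_tsum_nat_mul {p : ℕ → ℝ} (hp : ∀ n, 0 ≤ p n) (hp₀ : p 0 = 0)
    (hp₁ : HasSum p 1) (hmean : Summable fun n : ℕ => (n : ℝ) * p n) :
    1 ≤ ∑' n : ℕ, (n : ℝ) * p n := by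
  rw [← hp₁.tsum_eq]
  refine Summable.tsum_le_tsum (fun n => ?_) hp₁.summable hmean
  rcases Nat.eq_zero_or_pos n with rfl | hn
  · simp [hp₀]
  · exact le_mul_of_one_le_left (hp n) (Nat.one_le_cast.2 hn)

def shiftedGeometric (s : ℝ) (n : ℕ) : ℝ := if n = 0 then 0 else s * (1 + s)⁻¹ ^ n

section shiftedGeometric

variable {s : ℝ}

theorem shiftedGeometric_nonneg (hs : 0 ≤ s) (n : ℕ) : 0 ≤ shiftedGeometric s n := by
  unfold shiftedGeometric
  split_ifs <;> positivity

theorem shiftedGeometric_pos (hs : 0 < s) {n : ℕ} (hn : n ≠ 0) : 0 < shiftedGeometric s n := by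
  rw [shiftedGeometric, if_neg hn]
  positivity

theorem hasSum_shiftedGeometric (hs : 0 < s) : HasSum (shiftedGeometric s) 1 := by
  have hr : (1 + s)⁻¹ < 1 := inv_lt_one_of_one_lt₀ (by linarith)
  have h := ((hasSum_geometric_of_lt_one (by positivity) hr).mul_left s).sub (hasSum_ite_eq 0 s)
  have hq : shiftedGeometric s = fun n => s * (1 + s)⁻¹ ^ n - if n = 0 then s else 0 := by
    funext n
    rcases eq_or_ne n 0 with rfl | hn
    · simp [shiftedGeometric]
    · simp [shiftedGeometric, hn]
  have hsum : s * (1 - (1 + s)⁻¹)⁻¹ - s = 1 := by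
    field_simp [hs.ne']
    ring
  rw [hsum] at h
  rwa [hq]

theorem hasSum_nat_mul_shiftedGeometric (hs : 0 < s) :
    HasSum (fun n : ℕ => (n : ℝ) * shiftedGeometric s n) (1 + s⁻¹) := by
  have hr : ‖(1 + s)⁻¹‖ < 1 := by
    rw [norm_inv, Real.norm_of_nonneg (by positivity)]
    exact inv_lt_one_of_one_lt₀ (by linarith)
  have h := (hasSum_coe_mul_geometric_of_norm_lt_one hr).mul_left s
  have hq : (fun n : ℕ => (n : ℝ) * shiftedGeometric s n) =
      fun n : ℕ => s * (n * (1 + s)⁻¹ ^ n) := by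
    funext n
    rcases eq_or_ne n 0 with rfl | hn
    · simp
    · rw [shiftedGeometric, if_neg hn]
      ring
  have hsum : s * ((1 + s)⁻¹ / (1 - (1 + s)⁻¹) ^ 2) = 1 + s⁻¹ := by
    field_simp [hs.ne']
    ring
  rw [hsum] at h
  rwa [hq]

theorem log_sq_div_shiftedGeometric (hs : 0 < s) {n : ℕ} (hn : n ≠ 0) :
    log (s ^ 2 / shiftedGeometric s n) = log s + n * log (1 + s) := by
  have h : s ^ 2 / shiftedGeometric s n = s * (1 + s) ^ n := by
    rw [shiftedGeometric, if_neg hn, inv_pow]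
    field_simp
  rw [h, log_mul hs.ne' (by positivity), log_pow]

theorem hasSum_shiftedGeometric_mul_log (hs : 0 < s) :
    HasSum (fun n => shiftedGeometric s n * log (s ^ 2 / shiftedGeometric s n))
      (log s + (1 + s⁻¹) * log (1 + s)) := by
  have h := ((hasSum_shiftedGeometric hs).mul_right (log s)).add
    ((hasSum_nat_mul_shiftedGeometric hs).mul_right (log (1 + s)))
  rw [one_mul] at h
  refine h.congr_fun fun n => ?_
  rcases eq_or_ne n 0 with rfl | hn
  · simp [shiftedGeometric]
  · rw [log_sq_div_shiftedGeometric hs hn]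
    ring

end shiftedGeometric

theorem tsum_mul_log_sq_div_le {p : ℕ → ℝ} {s : ℝ} (hs : 0 < s) (hp : ∀ n, 0 ≤ p n)
    (hp₀ : p 0 = 0) (hp₁ : HasSum p 1) (hmean : Summable fun n : ℕ => (n : ℝ) * p n)
    (hlog : Summable fun n : ℕ => p n * log (s ^ 2 / p n)) :
    ∑' n : ℕ, p n * log (s ^ 2 / p n) ≤
      log s + (∑' n : ℕ, (n : ℝ) * p n) * log (1 + s) := by
  have hpointwise : ∀ n : ℕ, p n * log (s ^ 2 / p n) ≤
      p n * log s + n * p n * log (1 + s) + (shiftedGeometric s n - p n) := by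
    intro n
    rcases eq_or_ne n 0 with rfl | hn
    · simp [hp₀, shiftedGeometric]
    · have h := mul_log_div_le (pow_ne_zero 2 hs.ne') (hp n) (shiftedGeometric_pos hs hn)
      rw [log_sq_div_shiftedGeometric hs hn] at h
      linarith
  have hbound : HasSum (fun n : ℕ => p n * log s + n * p n * log (1 + s)
      + (shiftedGeometric s n - p n)) (log s + (∑' n : ℕ, (n : ℝ) * p n) * log (1 + s)) := by
    simpa using ((hp₁.mul_right (log s)).add (hmean.hasSum.mul_right (log (1 + s)))).add
      ((hasSum_shiftedGeometric hs).sub hp₁)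
  exact hbound.tsum_eq ▸ hlog.tsum_le_tsum hpointwise hbound.summable

def edgeFunctional (lam : ℝ) (p : ℕ → ℝ) : ℝ :=
  (∑' n : ℕ, (n : ℝ) * p n)⁻¹ * (∑' n : ℕ, p n * log (lam / p n))
    + Theta (∑' n : ℕ, (n : ℝ) * p n) / (∑' n : ℕ, (n : ℝ) * p n)

theorem edgeFunctional_le {p : ℕ → ℝ} {s : ℝ} (hs : 0 < s) (hp : ∀ n, 0 ≤ p n)
    (hp₀ : p 0 = 0) (hp₁ : HasSum p 1) (hmean : Summable fun n : ℕ => (n : ℝ) * p n)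
    (hlog : Summable fun n : ℕ => p n * log (s ^ 2 / p n)) :
    edgeFunctional (s ^ 2) p ≤ 2 * log (1 + s) := by
  set m := ∑' n : ℕ, (n : ℝ) * p n
  have hm : 1 ≤ m := one_le_tsum_nat_mul hp hp₀ hp₁ hmean
  have hm₀ : 0 < m := one_pos.trans_le hm
  calc edgeFunctional (s ^ 2) p
      ≤ m⁻¹ * (log s + m * log (1 + s)) + (m * log (1 + s) - log s) / m := by
        unfold edgeFunctional
        gcongr
        · exact tsum_mul_log_sq_div_le hs hp hp₀ hp₁ hmean hlog
        · exact Theta_le hm hs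
    _ = 2 * log (1 + s) := by
        field_simp
        ring

theorem edgeFunctional_shiftedGeometric {s : ℝ} (hs : 0 < s) :
    edgeFunctional (s ^ 2) (shiftedGeometric s) = 2 * log (1 + s) := by
  rw [edgeFunctional, (hasSum_nat_mul_shiftedGeometric hs).tsum_eq,
    (hasSum_shiftedGeometric_mul_log hs).tsum_eq, Theta_one_add_inv hs]
  field_simp
  ring

/-- **The support edge of the free Poisson distribution via the variational formula.**
For `λ ≥ 1`, the supremum over probability measures `p` on `{1,2,…}` with finite mean
`m₁(p)` of `(1/m₁(p)) ∑_{n≥1} p_n log(λ/p_n) + Θ(m₁(p))/m₁(p)` equals `2 log(1+√λ)`,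
the logarithm of the right edge `(1+√λ)²` of the support of the free Poisson law of
parameter `λ` (whose free cumulants are `k_n = λ` for all `n`). -/
theorem freePoisson_edge_variational (lam : ℝ) (hlam : 1 ≤ lam) :
    sSup {v : ℝ | ∃ p : ℕ → ℝ, (∀ k, 0 ≤ p k) ∧ p 0 = 0 ∧ HasSum p 1 ∧
        Summable (fun n : ℕ => (n : ℝ) * p n) ∧
        Summable (fun n : ℕ => p n * Real.log (lam / p n)) ∧
        v = (∑' n : ℕ, (n : ℝ) * p n)⁻¹ * (∑' n : ℕ, p n * Real.log (lam / p n))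
            + Theta (∑' n : ℕ, (n : ℝ) * p n) / (∑' n : ℕ, (n : ℝ) * p n)} =
      2 * Real.log (1 + Real.sqrt lam) := by
  obtain ⟨s, hs, rfl⟩ : ∃ s, 0 < s ∧ lam = s ^ 2 :=
    ⟨√lam, sqrt_pos.2 (by linarith), (sq_sqrt (by linarith)).symm⟩
  rw [sqrt_sq hs.le]
  refine IsGreatest.csSup_eq ⟨?_, ?_⟩
  · exact ⟨shiftedGeometric s, shiftedGeometric_nonneg hs.le, if_pos rfl,
      hasSum_shiftedGeometric hs, (hasSum_nat_mul_shiftedGeometric hs).summable,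
      (hasSum_shiftedGeometric_mul_log hs).summable, (edgeFunctional_shiftedGeometric hs).symm⟩
  · rintro v ⟨p, hp, hp₀, hp₁, hmean, hlog, rfl⟩
    exact edgeFunctional_le hs hp hp₀ hp₁ hmean hlog

end
end
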